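/- There exist no three-player impartial games X and Y such that X, Y, and X + Y are all O-games. -/
import Mathlib


/-- Three-player impartial games: well-founded game trees. -/
inductive G3 : Type 1 where
  | mk : (ι : Type) → (ι → G3) → G3

namespace G3

/-- The index type of options (moves) of a game. -/
def moves : G3 → Type
  | mk ι _ => ι

/-- The option of a game corresponding to a move. -/
def moveFn : (g : G3) → moves g → G3
  | mk _ f => f

/-- Disjunctive sum: move in exactly one component. -/
noncomputable def add : G3 → G3 → G3 :=
  G3.rec (fun ι f ihf =>
    G3.rec (fun κ g ihg =>
      mk (ι ⊕ κ) (fun x =>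
        match x with
        | Sum.inl i => ihf i (mk κ g)
        | Sum.inr j => ihg j)))

/-- The four outcome types of a three-player impartial game. -/
inductive PType : Type
  | N | O | P | Q
deriving DecidableEq

open Classical in
/-- The type of a game: `N` iff some option is a `P`-game; `O` iff it has at least
one option and all options are `N`-games; `P` iff all options are `O`-games;
`Q` otherwise. -/
noncomputable def typ : G3 → PType
  | mk ι f =>
    if ∃ i, typ (f i) = PType.P then PType.N
    else if Nonempty ι ∧ ∀ i, typ (f i) = PType.N then PType.O
    else if ∀ i, typ (f i) = PType.O then PType.P
    else PType.Q

/-- The Nim heap of size `n`: options are heaps of sizes `0, …, n-1`. -/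
def nim : ℕ → G3
  | n => mk (Fin n) (fun i => nim i)
termination_by n => n
decreasing_by exact i.isLt

/-- The sum of `n` Nim heaps of size 1. -/
noncomputable def ones : ℕ → G3
  | 0 => nim 0
  | n + 1 => add (ones n) (nim 1)

/- ================= Proof ================= -/

lemma add_mk {ι κ : Type} (f : ι → G3) (g : κ → G3) :
    add (mk ι f) (mk κ g) = mk (ι ⊕ κ) (fun x => match x with
      | Sum.inl i => add (f i) (mk κ g)
      | Sum.inr j => add (mk ι f) (g j)) := rfl

open Classical in
lemma typ_mk (ι : Type) (f : ι → G3) :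
    typ (mk ι f) =
      if ∃ i, typ (f i) = PType.P then PType.N
      else if Nonempty ι ∧ ∀ i, typ (f i) = PType.N then PType.O
      else if ∀ i, typ (f i) = PType.O then PType.P
      else PType.Q := by
  rw [typ]

lemma typ_N_iff (ι : Type) (f : ι → G3) :
    typ (mk ι f) = PType.N ↔ ∃ i, typ (f i) = PType.P := by
  rw [typ_mk]; split_ifs with h1 h2 h3
  · exact iff_of_true rfl h1
  · exact iff_of_false (by simp) h1
  · exact iff_of_false (by simp) h1
  · exact iff_of_false (by simp) h1

lemma typ_O_iff (ι : Type) (f : ι → G3) :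
    typ (mk ι f) = PType.O ↔ Nonempty ι ∧ ∀ i, typ (f i) = PType.N := by
  rw [typ_mk]; split_ifs with h1 h2 h3
  · exact iff_of_false (by simp)
      (fun h => by obtain ⟨i, hi⟩ := h1; simp [h.2 i] at hi)
  · exact iff_of_true rfl h2
  · exact iff_of_false (by simp) h2
  · exact iff_of_false (by simp) h2

lemma typ_P_iff (ι : Type) (f : ι → G3) :
    typ (mk ι f) = PType.P ↔ ∀ i, typ (f i) = PType.O := by
  rw [typ_mk]; split_ifs with h1 h2 h3
  · exact iff_of_false (by simp)
      (fun hall => by obtain ⟨i, hi⟩ := h1; simp [hall i] at hi)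
  · exact iff_of_false (by simp)
      (fun hallO => by
        obtain ⟨⟨i⟩, hallN⟩ := h2
        have := (hallN i).symm.trans (hallO i); simp at this)
  · exact iff_of_true rfl h3
  · exact iff_of_false (by simp) h3

lemma typN (A : G3) : typ A = PType.N ↔ ∃ i : moves A, typ (moveFn A i) = PType.P := by
  obtain ⟨ι, f⟩ := A; exact typ_N_iff ι f

lemma typO (A : G3) : typ A = PType.O ↔ Nonempty (moves A) ∧ ∀ i, typ (moveFn A i) = PType.N := by
  obtain ⟨ι, f⟩ := A; exact typ_O_iff ι f

lemma typP (A : G3) : typ A = PType.P ↔ ∀ i : moves A, typ (moveFn A i) = PType.O := by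
  obtain ⟨ι, f⟩ := A; exact typ_P_iff ι f

lemma typ_add_N_mk {ι κ : Type} (f : ι → G3) (g : κ → G3) :
    typ (add (mk ι f) (mk κ g)) = PType.N ↔
      (∃ i, typ (add (f i) (mk κ g)) = PType.P) ∨
      (∃ j, typ (add (mk ι f) (g j)) = PType.P) := by
  rw [add_mk, typ_N_iff]
  constructor
  · rintro ⟨(i | j), h⟩
    · exact Or.inl ⟨i, h⟩
    · exact Or.inr ⟨j, h⟩
  · rintro (⟨i, h⟩ | ⟨j, h⟩)
    · exact ⟨Sum.inl i, h⟩
    · exact ⟨Sum.inr j, h⟩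

lemma typ_add_O_mk {ι κ : Type} (f : ι → G3) (g : κ → G3) :
    typ (add (mk ι f) (mk κ g)) = PType.O ↔
      (Nonempty ι ∨ Nonempty κ) ∧
      (∀ i, typ (add (f i) (mk κ g)) = PType.N) ∧
      (∀ j, typ (add (mk ι f) (g j)) = PType.N) := by
  rw [add_mk, typ_O_iff]
  constructor
  · rintro ⟨hne, hall⟩
    refine ⟨?_, fun i => hall (Sum.inl i), fun j => hall (Sum.inr j)⟩
    rcases hne with ⟨x | x⟩
    · exact Or.inl ⟨x⟩
    · exact Or.inr ⟨x⟩
  · rintro ⟨hne, h1, h2⟩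
    refine ⟨?_, ?_⟩
    · rcases hne with h | h
      · obtain ⟨i⟩ := h; exact ⟨Sum.inl i⟩
      · obtain ⟨j⟩ := h; exact ⟨Sum.inr j⟩
    · rintro (i | j)
      · exact h1 i
      · exact h2 j

lemma typ_add_P_mk {ι κ : Type} (f : ι → G3) (g : κ → G3) :
    typ (add (mk ι f) (mk κ g)) = PType.P ↔
      (∀ i, typ (add (f i) (mk κ g)) = PType.O) ∧
      (∀ j, typ (add (mk ι f) (g j)) = PType.O) := by
  rw [add_mk, typ_P_iff]
  constructor
  · intro hall
    exact ⟨fun i => hall (Sum.inl i), fun j => hall (Sum.inr j)⟩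
  · rintro ⟨h1, h2⟩ (i | j)
    · exact h1 i
    · exact h2 j

lemma typ_add_N (A B : G3) :
    typ (add A B) = PType.N ↔
      (∃ i : moves A, typ (add (moveFn A i) B) = PType.P) ∨
      (∃ j : moves B, typ (add A (moveFn B j)) = PType.P) := by
  obtain ⟨ι, f⟩ := A; obtain ⟨κ, g⟩ := B; exact typ_add_N_mk f g

lemma typ_add_O (A B : G3) :
    typ (add A B) = PType.O ↔
      (Nonempty (moves A) ∨ Nonempty (moves B)) ∧
      (∀ i : moves A, typ (add (moveFn A i) B) = PType.N) ∧
      (∀ j : moves B, typ (add A (moveFn B j)) = PType.N) := by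
  obtain ⟨ι, f⟩ := A; obtain ⟨κ, g⟩ := B; exact typ_add_O_mk f g

lemma typ_add_P (A B : G3) :
    typ (add A B) = PType.P ↔
      (∀ i : moves A, typ (add (moveFn A i) B) = PType.O) ∧
      (∀ j : moves B, typ (add A (moveFn B j)) = PType.O) := by
  obtain ⟨ι, f⟩ := A; obtain ⟨κ, g⟩ := B; exact typ_add_P_mk f g

/-- Possible type pairs of summands of an `N`-sum (partial info). -/
def Nsum (a b : PType) : Prop :=
  (a = PType.P → b = PType.N) ∧ (b = PType.P → a = PType.N)

/-- Possible type pairs of summands of an `O`-sum (partial info). -/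
def Osum (a b : PType) : Prop :=
  (a = PType.N → b = PType.N) ∧ (b = PType.N → a = PType.N) ∧
  (a = PType.P → b = PType.O) ∧ (b = PType.P → a = PType.O)

/-- Possible type pairs of summands of a `P`-sum. -/
def Psum (a b : PType) : Prop :=
  (a = PType.N ∧ b = PType.O) ∨ (a = PType.O ∧ b = PType.N) ∨
  (a = PType.P ∧ b = PType.P) ∨ (a = PType.Q ∧ b = PType.Q)

def Inv (A B : G3) : Prop :=
  (typ (add A B) = PType.N → Nsum (typ A) (typ B)) ∧
  (typ (add A B) = PType.O → Osum (typ A) (typ B)) ∧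
  (typ (add A B) = PType.P → Psum (typ A) (typ B))

theorem inv : ∀ A B : G3, Inv A B := by
  intro A
  induction A with
  | mk ι f ihf =>
  intro B
  induction B with
  | mk κ g ihg =>
  refine ⟨?_, ?_, ?_⟩
  · -- N-sum
    intro hN
    rcases (typ_add_N_mk f g).mp hN with ⟨i, hi⟩ | ⟨j, hj⟩
    · have hp := (ihf i (mk κ g)).2.2 hi
      constructor
      · intro hA
        have h1 : typ (f i) = PType.O := (typ_P_iff ι f).mp hA i
        rcases hp with ⟨ha, hb⟩ | ⟨ha, hb⟩ | ⟨ha, hb⟩ | ⟨ha, hb⟩ <;> simp_all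
      · intro hB
        have h1 : typ (f i) = PType.P := by
          rcases hp with ⟨ha, hb⟩ | ⟨ha, hb⟩ | ⟨ha, hb⟩ | ⟨ha, hb⟩ <;> simp_all
        exact (typ_N_iff ι f).mpr ⟨i, h1⟩
    · have hp := (ihg j).2.2 hj
      constructor
      · intro hA
        have h1 : typ (g j) = PType.P := by
          rcases hp with ⟨ha, hb⟩ | ⟨ha, hb⟩ | ⟨ha, hb⟩ | ⟨ha, hb⟩ <;> simp_all
        exact (typ_N_iff κ g).mpr ⟨j, h1⟩
      · intro hB
        have h1 : typ (g j) = PType.O := (typ_P_iff κ g).mp hB j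
        rcases hp with ⟨ha, hb⟩ | ⟨ha, hb⟩ | ⟨ha, hb⟩ | ⟨ha, hb⟩ <;> simp_all
  · -- O-sum
    intro hO
    obtain ⟨hne, hA', hB'⟩ := (typ_add_O_mk f g).mp hO
    refine ⟨?_, ?_, ?_, ?_⟩
    · intro hA
      obtain ⟨i, hiP⟩ := (typ_N_iff ι f).mp hA
      exact ((ihf i (mk κ g)).1 (hA' i)).1 hiP
    · intro hB
      obtain ⟨j, hjP⟩ := (typ_N_iff κ g).mp hB
      exact ((ihg j).1 (hB' j)).2 hjP
    · intro hA
      have hfO : ∀ i, typ (f i) = PType.O := (typ_P_iff ι f).mp hA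
      have hgN : ∀ j, typ (g j) = PType.N := fun j => ((ihg j).1 (hB' j)).1 hA
      rcases isEmpty_or_nonempty κ with hk | hk
      · exfalso
        have hBP : typ (mk κ g) = PType.P := (typ_P_iff κ g).mpr (fun j => (hk.false j).elim)
        rcases hne with h | h
        · obtain ⟨i₁⟩ := h
          have := ((ihf i₁ (mk κ g)).1 (hA' i₁)).2 hBP
          simp [hfO i₁] at this
        · obtain ⟨j₁⟩ := h; exact hk.false j₁
      · exact (typ_O_iff κ g).mpr ⟨hk, hgN⟩
    · intro hB
      have hgO : ∀ j, typ (g j) = PType.O := (typ_P_iff κ g).mp hB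
      have hfN : ∀ i, typ (f i) = PType.N := fun i => ((ihf i (mk κ g)).1 (hA' i)).2 hB
      rcases isEmpty_or_nonempty ι with hk | hk
      · exfalso
        have hAP : typ (mk ι f) = PType.P := (typ_P_iff ι f).mpr (fun i => (hk.false i).elim)
        rcases hne with h | h
        · obtain ⟨i₁⟩ := h; exact hk.false i₁
        · obtain ⟨j₁⟩ := h
          have := ((ihg j₁).1 (hB' j₁)).1 hAP
          simp [hgO j₁] at this
      · exact (typ_O_iff ι f).mpr ⟨hk, hfN⟩
  · -- P-sum
    intro hP
    obtain ⟨hA', hB'⟩ := (typ_add_P_mk f g).mp hP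
    cases hBt : typ (mk κ g) with
    | N =>
      obtain ⟨j₁, hj₁P⟩ := (typ_N_iff κ g).mp hBt
      have hAO : typ (mk ι f) = PType.O := ((ihg j₁).2.1 (hB' j₁)).2.2.2 hj₁P
      exact Or.inr (Or.inl ⟨hAO, rfl⟩)
    | O =>
      obtain ⟨⟨j₁⟩, hgN⟩ := (typ_O_iff κ g).mp hBt
      have hAN : typ (mk ι f) = PType.N := ((ihg j₁).2.1 (hB' j₁)).2.1 (hgN j₁)
      exact Or.inl ⟨hAN, rfl⟩
    | P =>
      have hfO : ∀ i, typ (f i) = PType.O :=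
        fun i => ((ihf i (mk κ g)).2.1 (hA' i)).2.2.2 hBt
      exact Or.inr (Or.inr (Or.inl ⟨(typ_P_iff ι f).mpr hfO, rfl⟩))
    | Q =>
      have hfnN : ∀ i, typ (f i) ≠ PType.N := by
        intro i h
        have := ((ihf i (mk κ g)).2.1 (hA' i)).1 h
        simp [hBt] at this
      have hfnP : ∀ i, typ (f i) ≠ PType.P := by
        intro i h
        have := ((ihf i (mk κ g)).2.1 (hA' i)).2.2.1 h
        simp [hBt] at this
      have hAnN : typ (mk ι f) ≠ PType.N := by
        intro h
        obtain ⟨i, hiP⟩ := (typ_N_iff ι f).mp h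
        exact hfnP i hiP
      have hAnO : typ (mk ι f) ≠ PType.O := by
        intro h
        obtain ⟨⟨i⟩, hN⟩ := (typ_O_iff ι f).mp h
        exact hfnN i (hN i)
      have hAnP : typ (mk ι f) ≠ PType.P := by
        intro h
        have hnotall : ¬ ∀ j, typ (g j) = PType.O := by
          intro hall
          have := (typ_P_iff κ g).mpr hall
          simp [hBt] at this
        obtain ⟨j₁, hj₁⟩ := not_forall.mp hnotall
        have hgO : typ (g j₁) = PType.O := ((ihg j₁).2.1 (hB' j₁)).2.2.1 h
        exact hj₁ hgO
      have hAQ : typ (mk ι f) = PType.Q := by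
        cases hAt : typ (mk ι f) with
        | N => exact absurd hAt hAnN
        | O => exact absurd hAt hAnO
        | P => exact absurd hAt hAnP
        | Q => rfl
      exact Or.inr (Or.inr (Or.inr ⟨hAQ, rfl⟩))

/-- The option relation. -/
def IsOption (x y : G3) : Prop := ∃ i : moves y, moveFn y i = x

theorem isOption_wf : WellFounded IsOption := by
  constructor
  intro g
  induction g with
  | mk ι f ih =>
    constructor
    rintro y ⟨i, rfl⟩
    exact ih i

theorem subpos_wf : WellFounded (Relation.TransGen IsOption) := isOption_wf.transGen

theorem main : ∀ X Y : G3,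
    typ X = PType.O → typ Y = PType.O → typ (add X Y) = PType.O → False := by
  intro X
  induction X using subpos_wf.induction with
  | _ X IH1 =>
  intro Y
  induction Y using subpos_wf.induction with
  | _ Y IH2 =>
  intro hX hY hXY
  obtain ⟨hXne, hXopts⟩ := (typO X).mp hX
  obtain ⟨hYne, hYopts⟩ := (typO Y).mp hY
  obtain ⟨-, hall1, hall2⟩ := (typ_add_O X Y).mp hXY
  obtain ⟨i₀⟩ := hXne
  obtain ⟨j₀⟩ := hYne
  -- find Y₁, an option of an option of Y, with X + Y₁ of type P
  obtain ⟨j, hj⟩ : ∃ j, typ (add X (moveFn (moveFn Y j₀) j)) = PType.P := by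
    rcases (typ_add_N X (moveFn Y j₀)).mp (hall2 j₀) with ⟨i, hi⟩ | h
    · exfalso
      have hp := (inv (moveFn X i) (moveFn Y j₀)).2.2 hi
      have h1 := hXopts i
      have h2 := hYopts j₀
      rcases hp with ⟨ha, hb⟩ | ⟨ha, hb⟩ | ⟨ha, hb⟩ | ⟨ha, hb⟩ <;> simp_all
    · exact h
  have hY₁N : typ (moveFn (moveFn Y j₀) j) = PType.N := by
    have hp := (inv X (moveFn (moveFn Y j₀) j)).2.2 hj
    rcases hp with ⟨ha, hb⟩ | ⟨ha, hb⟩ | ⟨ha, hb⟩ | ⟨ha, hb⟩ <;> simp_all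
  -- find X₁, an option of an option of X, with X₁ + Y of type P
  obtain ⟨k, hk⟩ : ∃ k, typ (add (moveFn (moveFn X i₀) k) Y) = PType.P := by
    rcases (typ_add_N (moveFn X i₀) Y).mp (hall1 i₀) with h | ⟨j', hj'⟩
    · exact h
    · exfalso
      have hp := (inv (moveFn X i₀) (moveFn Y j')).2.2 hj'
      have h1 := hXopts i₀
      have h2 := hYopts j'
      rcases hp with ⟨ha, hb⟩ | ⟨ha, hb⟩ | ⟨ha, hb⟩ | ⟨ha, hb⟩ <;> simp_all
  have hX₁N : typ (moveFn (moveFn X i₀) k) = PType.N := by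
    have hp := (inv (moveFn (moveFn X i₀) k) Y).2.2 hk
    rcases hp with ⟨ha, hb⟩ | ⟨ha, hb⟩ | ⟨ha, hb⟩ | ⟨ha, hb⟩ <;> simp_all
  -- X_{i₀} + Y₁ is an option of the P-position X + Y₁, hence O
  have h5 : typ (add (moveFn X i₀) (moveFn (moveFn Y j₀) j)) = PType.O :=
    ((typ_add_P X (moveFn (moveFn Y j₀) j)).mp hj).1 i₀
  -- hence its option X₁ + Y₁ is N
  have h6 : typ (add (moveFn (moveFn X i₀) k) (moveFn (moveFn Y j₀) j)) = PType.N :=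
    ((typ_add_O (moveFn X i₀) (moveFn (moveFn Y j₀) j)).mp h5).2.1 k
  -- X₁ + Y₁ of type N has a P-option; both cases contradict the IH
  rcases (typ_add_N (moveFn (moveFn X i₀) k) (moveFn (moveFn Y j₀) j)).mp h6 with
    ⟨k', hk'⟩ | ⟨l, hl⟩
  · -- typ (X₁' + Y₁) = P  with  typ Y₁ = N  forces typ X₁' = O
    have hp := (inv (moveFn (moveFn (moveFn X i₀) k) k') (moveFn (moveFn Y j₀) j)).2.2 hk'
    have hOX : typ (moveFn (moveFn (moveFn X i₀) k) k') = PType.O := by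
      rcases hp with ⟨ha, hb⟩ | ⟨ha, hb⟩ | ⟨ha, hb⟩ | ⟨ha, hb⟩ <;> simp_all
    have hXO : typ (add (moveFn (moveFn (moveFn X i₀) k) k') Y) = PType.O :=
      ((typ_add_P (moveFn (moveFn X i₀) k) Y).mp hk).1 k'
    have htrans : Relation.TransGen IsOption (moveFn (moveFn (moveFn X i₀) k) k') X :=
      Relation.TransGen.head ⟨k', rfl⟩
        (Relation.TransGen.head ⟨k, rfl⟩ (Relation.TransGen.single ⟨i₀, rfl⟩))
    exact IH1 _ htrans Y hOX hY hXO
  · -- typ (X₁ + Y₁') = P  with  typ X₁ = N  forces typ Y₁' = O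
    have hp := (inv (moveFn (moveFn X i₀) k) (moveFn (moveFn (moveFn Y j₀) j) l)).2.2 hl
    have hOY : typ (moveFn (moveFn (moveFn Y j₀) j) l) = PType.O := by
      rcases hp with ⟨ha, hb⟩ | ⟨ha, hb⟩ | ⟨ha, hb⟩ | ⟨ha, hb⟩ <;> simp_all
    have hYO : typ (add X (moveFn (moveFn (moveFn Y j₀) j) l)) = PType.O :=
      ((typ_add_P X (moveFn (moveFn Y j₀) j)).mp hj).2 l
    have htrans : Relation.TransGen IsOption (moveFn (moveFn (moveFn Y j₀) j) l) Y :=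
      Relation.TransGen.head ⟨l, rfl⟩
        (Relation.TransGen.head ⟨j, rfl⟩ (Relation.TransGen.single ⟨j₀, rfl⟩))
    exact IH2 _ htrans hX hOY hYO

theorem no_O_plus_O_eq_O :
    ¬ ∃ X Y : G3, typ X = PType.O ∧ typ Y = PType.O ∧ typ (add X Y) = PType.O := by
  rintro ⟨X, Y, hX, hY, hXY⟩
  exact main X Y hX hY hXY

end G3
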